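/- Let j ∈ ℕ, j ≥ 1, and suppose N and M = N/10 are integers with 2^{j+3} < N and 2^{j−1} ≤ M < 2^j. Define ℓ(β) = ⌈log₂(β+1)⌉. Then the average of ℓ(β) over integers β ∈ [M, N) is strictly greater than j + 15/7. -/

import Mathlib

/-!
The bit length `ℓ β = ⌈log₂ (β + 1)⌉ = Nat.clog 2 (β + 1)` is constant, equal to `k`, on each dyadic
block `[2^(k-1), 2^k)`. Splitting `[M, N)` at `2^j, …, 2^(j+3)` gives
`∑ ℓ + 15·2^j = (N - M)(j + 4) + 4M`, so with `N = 10M` the claim reduces to `105·2^j < 145M`,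
which follows from `8·2^j < N = 10M`.
-/

open Finset

namespace Nat

theorem clog_two_succ_eq {k β : ℕ} (hlo : 2 ^ (k - 1) ≤ β) (hhi : β < 2 ^ k) :
    clog 2 (β + 1) = k := by
  have hle : clog 2 (β + 1) ≤ k := (clog_le_iff_le_pow one_lt_two).mpr hhi
  have hlt : k - 1 < clog 2 (β + 1) := (lt_clog_iff_pow_lt one_lt_two).mpr (lt_succ_of_le hlo)
  omega

theorem sum_Ico_clog_two_succ {k a b : ℕ} (ha : 2 ^ (k - 1) ≤ a) (hb : b ≤ 2 ^ k) :
    ∑ β ∈ Ico a b, clog 2 (β + 1) = (b - a) * k := by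
  rw [sum_congr rfl fun β hβ => clog_two_succ_eq (ha.trans (mem_Ico.mp hβ).1)
    ((mem_Ico.mp hβ).2.trans_le hb), sum_const, card_Ico, smul_eq_mul]

theorem sum_Ico_pow_two_clog_two_succ (k : ℕ) :
    ∑ β ∈ Ico (2 ^ k) (2 ^ (k + 1)), clog 2 (β + 1) = 2 ^ k * (k + 1) := by
  rw [sum_Ico_clog_two_succ (by simp) le_rfl, pow_succ, mul_two, Nat.add_sub_cancel]

theorem sum_Ico_clog_two_succ_add_fifteen_mul_two_pow {j M N : ℕ}
    (hM : 2 ^ (j - 1) ≤ M) (hMj : M ≤ 2 ^ j) (hN : 2 ^ (j + 3) ≤ N) (hNj : N ≤ 2 ^ (j + 4)) :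
    ∑ β ∈ Ico M N, clog 2 (β + 1) + 15 * 2 ^ j = (N - M) * (j + 4) + 4 * M := by
  have h₀₁ : 2 ^ j ≤ 2 ^ (j + 1) := pow_le_pow_right₀ one_le_two (by omega)
  have h₁₂ : 2 ^ (j + 1) ≤ 2 ^ (j + 2) := pow_le_pow_right₀ one_le_two (by omega)
  have h₂₃ : 2 ^ (j + 2) ≤ 2 ^ (j + 3) := pow_le_pow_right₀ one_le_two (by omega)
  rw [← sum_Ico_consecutive _ hMj (by omega), ← sum_Ico_consecutive _ h₀₁ (by omega),
    ← sum_Ico_consecutive _ h₁₂ (by omega), ← sum_Ico_consecutive _ h₂₃ hN,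
    sum_Ico_clog_two_succ hM le_rfl, sum_Ico_pow_two_clog_two_succ,
    sum_Ico_pow_two_clog_two_succ, sum_Ico_pow_two_clog_two_succ,
    sum_Ico_clog_two_succ (by simp) hNj]
  have hMN : M ≤ N := hMj.trans (h₀₁.trans (h₁₂.trans (h₂₃.trans hN)))
  zify [hMj, hN, hMN]
  ring

end Nat

theorem Real.ceil_logb_two_natCast_add_one (β : ℕ) :
    ⌈Real.logb 2 ((β : ℝ) + 1)⌉ = Nat.clog 2 (β + 1) := by
  rw [← Nat.cast_add_one, ← Nat.cast_ofNat, Real.ceil_logb_natCast (by positivity),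
    Int.clog_natCast]

theorem average_length_case2_general (j M N : ℕ) (hN : N = 10 * M)
    (h₁ : 2 ^ (j + 3) < N)
    (h₂ : 2 ^ (j - 1) ≤ M) (h₃ : M < 2 ^ j) :
    (j : ℝ) + 15 / 7 <
      (∑ β ∈ Finset.Ico M N, (⌈Real.logb 2 ((β : ℝ) + 1)⌉ : ℝ)) / ((N : ℝ) - M) := by
  have hN₄ : N ≤ 2 ^ (j + 4) := by rw [pow_add]; omega
  have hsum := Nat.sum_Ico_clog_two_succ_add_fifteen_mul_two_pow h₂ h₃.le h₁.le hN₄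
  simp only [Real.ceil_logb_two_natCast_add_one, Int.cast_natCast]
  have hsumℝ : (∑ β ∈ Ico M N, (Nat.clog 2 (β + 1) : ℝ)) + 15 * 2 ^ j
      = ((N : ℝ) - M) * (j + 4) + 4 * M := by
    rw [← Nat.cast_sub (by omega)]
    exact_mod_cast hsum
  have hMpos : (0 : ℝ) < M := by exact_mod_cast (Nat.one_le_two_pow.trans h₂)
  have h₁ℝ : ((2 ^ (j + 3) : ℕ) : ℝ) < N := by exact_mod_cast h₁
  have hNℝ : (N : ℝ) = 10 * M := by exact_mod_cast hN
  push_cast [pow_add] at h₁ℝ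
  rw [hNℝ] at hsumℝ h₁ℝ ⊢
  rw [lt_div_iff₀ (by linarith)]
  linarith

/-- average bit-length over `[M, N)` exceeds `j + 15/7`
in the case `2^{j+3} < N`. -/
theorem average_length_case2 (j M N : ℕ) (hj : 1 ≤ j) (hN : N = 10 * M)
    (h₁ : 2 ^ (j + 3) < N)
    (h₂ : 2 ^ (j - 1) ≤ M) (h₃ : M < 2 ^ j) :
    (j : ℝ) + 15 / 7 <
      (∑ β ∈ Finset.Ico M N, (⌈Real.logb 2 ((β : ℝ) + 1)⌉ : ℝ)) / ((N : ℝ) - M) :=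
  average_length_case2_general j M N hN h₁ h₂ h₃
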